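/- arXiv:2006.09321 — 3 statements merged into one kernel-verified Lean document; each statement's English description precedes it below -/
import Mathlib

section
/- If (a, b) is an interval parking function for n cars, then a ≤_C O(a) ≤_C b and O(b*)* ≤_C b. -/
/-- `o` is the outcome of running parking Algorithm A on preference vector `a`:
car `i` parks in the first unoccupied spot in `[a i, n]`, and every car parks. -/
def IsAOutcome {n : ℕ} (a o : Fin n → Fin n) : Prop :=
  Function.Injective o ∧ ∀ i, a i ≤ o i ∧
    ∀ s, a i ≤ s → s < o i → ∃ j, j < i ∧ o j = s

/-- `a` is a parking function. -/
def IsParkingFunction {n : ℕ} (a : Fin n → Fin n) : Prop :=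
  ∃ o, IsAOutcome a o

/-- `o` is the outcome of running parking Algorithm B on the pair `(a, b)`:
car `i` parks in the first unoccupied spot in `[a i, b i]`, and every car parks. -/
def IsBOutcome {n : ℕ} (a b o : Fin n → Fin n) : Prop :=
  Function.Injective o ∧ ∀ i, a i ≤ o i ∧ o i ≤ b i ∧
    ∀ s, a i ≤ s → s < o i → ∃ j, j < i ∧ o j = s

/-- `(a, b)` is an interval parking function. -/
def IsIPF {n : ℕ} (a b : Fin n → Fin n) : Prop :=
  ∃ o, IsBOutcome a b o

/-- The conjugate (reverse complement) `x*` of `x`, with `x*(i) = n + 1 - x(n + 1 - i)`. -/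
def pconj {n : ℕ} (f : Fin n → Fin n) : Fin n → Fin n :=
  fun i => (f i.rev).rev

/-- The pair `(x, y)` is reachable, `x ⊵_R y`: there is an IPF `(a, b)` with
`O(a) = x` and `O(b*) = y*`. -/
def Reaches {n : ℕ} (x y : Fin n → Fin n) : Prop :=
  ∃ a b : Fin n → Fin n, IsIPF a b ∧ IsAOutcome a x ∧ IsAOutcome (pconj b) (pconj y)

/-- Pseudoreachability `x ≥_P y`: the reflexive-transitive closure of reachability. -/
def PseudoGE {n : ℕ} (x y : Equiv.Perm (Fin n)) : Prop :=
  Relation.ReflTransGen (fun u v : Equiv.Perm (Fin n) => Reaches ⇑u ⇑v) x y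

/-- `#{k ∈ [i] : x(k) ≥ j}` (with `i`, `j` zero-indexed). -/
def bcount {n : ℕ} (x : Fin n → Fin n) (i j : Fin n) : ℕ :=
  (Finset.univ.filter (fun k : Fin n => k ≤ i ∧ j ≤ x k)).card

/-- The Bruhat order `x ≥_B y` on the symmetric group. -/
def BruhatGE {n : ℕ} (x y : Equiv.Perm (Fin n)) : Prop :=
  ∀ i j : Fin n, bcount ⇑y i j ≤ bcount ⇑x i j

/-- The number of inversions (the Coxeter length) of `f`. -/
def invCount {n : ℕ} (f : Fin n → Fin n) : ℕ :=
  (Finset.univ.filter (fun p : Fin n × Fin n => p.1 < p.2 ∧ f p.2 < f p.1)).card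

/-- The adjacent transposition `s_i` exchanging `i` and `i+1` (one-indexed),
as a permutation of `Fin n`. -/
def sgen (n : ℕ) (i : ℕ) : Equiv.Perm (Fin n) :=
  if h : 1 ≤ i ∧ i < n then Equiv.swap ⟨i - 1, by omega⟩ ⟨i, h.2⟩ else 1

/-- Left weak order: `x ≥_W y` iff `x = s_{i₁} ⋯ s_{i_k} · y` with `ℓ(x) = ℓ(y) + k`. -/
def WeakGE {n : ℕ} (x y : Equiv.Perm (Fin n)) : Prop :=
  ∃ l : List ℕ, (∀ i ∈ l, 1 ≤ i ∧ i ≤ n - 1) ∧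
    x = (l.map (sgen n)).prod * y ∧ invCount ⇑x = invCount ⇑y + l.length

/-- The projection `x ↦ x̂` deleting the last position and the value `x(n)`. -/
def hatf {n : ℕ} (x : Fin (n + 1) → Fin (n + 1)) : Fin n → Fin n :=
  fun i =>
    if h : (x i.castSucc).val < (x (Fin.last n)).val
    then ⟨(x i.castSucc).val, by have h1 := (x (Fin.last n)).isLt; omega⟩
    else ⟨(x i.castSucc).val - 1, by have h1 := (x i.castSucc).isLt; have h2 := i.isLt; omega⟩

/-- `lam n f k` is `λ_k` of the permutation of `[n]` with one-line notation `f(1), …, f(n)`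
(one-indexed): `λ_{n-1}(x) = n - x(n)` and `λ_k(x) = λ_k(x̄)` for `k ≤ n - 2`, where
`x̄ ∈ S_{n-1}` is the restriction of `u⁻¹·x` (`u = s_{x(n)} ⋯ s_{n-1}`), concretely
`x̄(i) = x(i)` if `x(i) < x(n)` and `x̄(i) = x(i) - 1` if `x(i) > x(n)`. -/
def lam : ℕ → (ℕ → ℕ) → ℕ → ℕ
  | 0, _, _ => 0
  | n + 1, f, k =>
    if k = n then (n + 1) - f (n + 1)
    else lam n (fun i => if f i < f (n + 1) then f i else f i - 1) k

/-- The one-line notation of `x`, as a one-indexed function `ℕ → ℕ`. -/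
def oneline {n : ℕ} (x : Fin n → Fin n) : ℕ → ℕ :=
  fun i => if h : i - 1 < n then (x ⟨i - 1, h⟩).val + 1 else 0

/-- `y` contains the pattern `σ`. -/
def ContainsPattern {n m : ℕ} (y : Equiv.Perm (Fin n)) (σ : Equiv.Perm (Fin m)) : Prop :=
  ∃ f : Fin m → Fin n, StrictMono f ∧ ∀ j k, y (f j) < y (f k) ↔ σ j < σ k

/-- `x` is an AR (Arndt–Riehl) permutation: `x⁻¹(i) ≤ i + 1` for all `i ∈ [n]`. -/
def IsAR {n : ℕ} (x : Equiv.Perm (Fin n)) : Prop :=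
  ∀ i : Fin n, (x.symm i).val ≤ i.val + 1

/-! A successful run of Algorithm B on `(a, b)` is also a run of Algorithm A on `a`, and
Algorithm A has a unique outcome, so `O(a)` is the outcome of `(a, b)`, which lies between
`a` and `b`. The second inequality is `b* ≤_C O(b*)` read through conjugation, an
order-reversing involution. -/

section Outcome

variable {n : ℕ} {a b o o' : Fin n → Fin n}

theorem IsBOutcome.isAOutcome (h : IsBOutcome a b o) : IsAOutcome a o :=
  ⟨h.1, fun i => ⟨(h.2 i).1, (h.2 i).2.2⟩⟩

theorem IsAOutcome.apply_le_of_eqOn_Iio (ho : IsAOutcome a o) (ho' : IsAOutcome a o')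
    {i : Fin n} (hearlier : Set.EqOn o o' (Set.Iio i)) : o' i ≤ o i := by
  by_contra! hlt
  obtain ⟨j, hj, hje⟩ := (ho'.2 i).2 (o i) (ho.2 i).1 hlt
  exact hj.ne (ho.1 ((hearlier hj).trans hje))

theorem IsAOutcome.unique (ho : IsAOutcome a o) (ho' : IsAOutcome a o') : o = o' := by
  funext i
  induction i using WellFoundedLT.induction with
  | _ i IH =>
    have hearlier : Set.EqOn o o' (Set.Iio i) := IH
    exact le_antisymm (ho'.apply_le_of_eqOn_Iio ho hearlier.symm)
      (ho.apply_le_of_eqOn_Iio ho' hearlier)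

end Outcome

theorem pconj_le_of_pconj_le {n : ℕ} {f g : Fin n → Fin n} (h : ∀ i, pconj f i ≤ g i) (i : Fin n) :
    pconj g i ≤ f i := by
  simpa [pconj] using Fin.rev_le_rev.mpr (h i.rev)

/-- Prop. `lots-of-facts`(2). If `(a, b)` is an IPF then
`a ≤_C O(a) ≤_C b` and `O(b*)* ≤_C b`. -/
theorem stmt3 {n : ℕ} (a b : Fin n → Fin n) (h : IsIPF a b) :
    (∀ o, IsAOutcome a o → ∀ i, a i ≤ o i ∧ o i ≤ b i) ∧
    (∀ o, IsAOutcome (pconj b) o → ∀ i, pconj o i ≤ b i) := by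
  obtain ⟨o₀, ho₀⟩ := h
  refine ⟨fun o ho i => ⟨(ho.2 i).1, ?_⟩, fun o ho => pconj_le_of_pconj_le fun i => (ho.2 i).1⟩
  rw [ho.unique ho₀.isAOutcome]
  exact (ho₀.2 i).2.1
end

section
/- If x, y are permutations of [n] with x = s_a·y for some a ∈ [n−1] and ℓ(x) = ℓ(y) + 1 (i.e., x covers y in the left weak order), then x ⊵_R y. -/
open Equiv Function

lemma isAOutcome_self {n : ℕ} {o : Fin n → Fin n} (ho : Injective o) : IsAOutcome o o :=
  ⟨ho, fun _ => ⟨le_rfl, fun _ h₁ h₂ => absurd (h₁.trans_lt h₂) (lt_irrefl _)⟩⟩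

lemma isIPF_of_le {n : ℕ} {o b : Fin n → Fin n} (ho : Injective o) (hb : ∀ i, o i ≤ b i) :
    IsIPF o b :=
  ⟨o, ho, fun i => ⟨le_rfl, hb i, fun _ h₁ h₂ => absurd (h₁.trans_lt h₂) (lt_irrefl _)⟩⟩

lemma isAOutcome_update_of_succ {n : ℕ} {o : Fin n → Fin n} (ho : Injective o) {i j : Fin n}
    (hji : j < i) (hsucc : (o j).val + 1 = o i) : IsAOutcome (update o i (o j)) o := by
  refine ⟨ho, fun k => ?_⟩
  rcases eq_or_ne k i with rfl | hki
  · rw [update_self]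
    refine ⟨Fin.le_def.2 (by omega), fun s hs₁ hs₂ => ⟨j, hji, ?_⟩⟩
    rw [Fin.le_def] at hs₁
    rw [Fin.lt_def] at hs₂
    exact Fin.ext (by omega)
  · rw [update_of_ne hki]
    exact (isAOutcome_self ho).2 k

lemma pconj_injective {n : ℕ} {f : Fin n → Fin n} (hf : Injective f) : Injective (pconj f) :=
  Fin.rev_injective.comp (hf.comp Fin.rev_injective)

lemma pconj_update {n : ℕ} (f : Fin n → Fin n) (i v : Fin n) :
    pconj (update f i v) = update (pconj f) i.rev v.rev := by
  funext k
  simp only [pconj, update_apply, Fin.rev_eq_iff]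
  split_ifs <;> simp only [Fin.rev_rev]

lemma sgen_eq_swap {n a : ℕ} (ha₁ : 1 ≤ a) (ha₂ : a < n) :
    sgen n a = swap ⟨a - 1, by omega⟩ ⟨a, ha₂⟩ := by
  rw [sgen, dif_pos ⟨ha₁, ha₂⟩]

lemma Fin.lt_of_swap_apply_lt {n : ℕ} {p q u v : Fin n} (hpq : p.val + 1 = q)
    (h : ¬(u = q ∧ v = p)) (hlt : swap p q u < swap p q v) : u < v := by
  rw [swap_apply_def, swap_apply_def] at hlt
  rw [not_and] at h
  split_ifs at hlt <;> simp only [Fin.lt_def, Fin.ext_iff] at * <;> omega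

lemma invCount_swap_mul_le {n : ℕ} {p q : Fin n} (hpq : p.val + 1 = q) {y : Perm (Fin n)}
    (hy : y.symm q ≤ y.symm p) : invCount ⇑(swap p q * y) ≤ invCount ⇑y := by
  refine Finset.card_le_card (Finset.monotone_filter_right _ fun uv _ huv => ?_)
  refine ⟨huv.1, Fin.lt_of_swap_apply_lt hpq (fun ⟨hq, hp⟩ => ?_) huv.2⟩
  rw [← hq, ← hp, y.symm_apply_apply, y.symm_apply_apply] at hy
  exact absurd huv.1 hy.not_gt

/-- The witness is the IPF `(swap p q * y, b)`, where `b` agrees with `y` except that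
`b (y⁻¹ p) = q`. In the conjugated run, car `y⁻¹ p` first tries the spot of car `y⁻¹ q`, which
has parked before it because the swap adds an inversion, and so ends one spot further on. -/
lemma reaches_swap_mul {n : ℕ} {p q : Fin n} (hpq : p.val + 1 = q) {y : Perm (Fin n)}
    (hl : invCount ⇑(swap p q * y) = invCount ⇑y + 1) : Reaches ⇑(swap p q * y) ⇑y := by
  obtain ⟨i, hyi⟩ : ∃ i, y i = p := ⟨_, y.apply_symm_apply p⟩
  obtain ⟨j, hyj⟩ : ∃ j, y j = q := ⟨_, y.apply_symm_apply q⟩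
  have hij : i < j := lt_of_not_ge fun h => by
    have := invCount_swap_mul_le hpq (y := y)
      (by rwa [← hyi, ← hyj, y.symm_apply_apply, y.symm_apply_apply])
    omega
  refine ⟨_, update y i q, isIPF_of_le (swap p q * y).injective fun k => ?_,
    isAOutcome_self (swap p q * y).injective, ?_⟩
  · rcases eq_or_ne k i with rfl | hki
    · rw [update_self, Perm.mul_apply, hyi, swap_apply_left]
    rcases eq_or_ne k j with rfl | hkj
    · rw [update_of_ne hki, Perm.mul_apply, hyj, swap_apply_right, Fin.le_def]
      omega
    · rw [update_of_ne hki, Perm.mul_apply, swap_apply_of_ne_of_ne]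
      · exact fun h => hki (y.injective (h.trans hyi.symm))
      · exact fun h => hkj (y.injective (h.trans hyj.symm))
  · have hqj : q.rev = pconj y j.rev := by simp only [pconj, Fin.rev_rev, hyj]
    rw [pconj_update, hqj]
    refine isAOutcome_update_of_succ (pconj_injective y.injective) (Fin.rev_lt_rev.2 hij) ?_
    simp only [pconj, Fin.rev_rev, hyi, hyj, Fin.val_rev]
    omega

/-- Prop. `lem:inv-1`. If `x = s_a · y` covers `y` in left weak order
(i.e. `ℓ(x) = ℓ(y) + 1`), then `x ⊵_R y`. -/
theorem stmt7 {n : ℕ} (x y : Equiv.Perm (Fin n)) (a : ℕ) (ha1 : 1 ≤ a) (ha2 : a ≤ n - 1)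
    (hx : x = sgen n a * y) (hl : invCount ⇑x = invCount ⇑y + 1) :
    Reaches ⇑x ⇑y := by
  rw [sgen_eq_swap ha1 (by omega)] at hx
  rw [hx] at hl ⊢
  exact reaches_swap_mul (by simp only; omega) hl
end

section
/- The pseudoreachability order on S_n is graded by length: if x covers y in the pseudoreachability order (i.e., x >_P y and there is no z with x >_P z >_P y), then ℓ(x) = ℓ(y) + 1. -/
/-!
Reachability has a concrete description: `x ⊵_R y` iff for every position `k`, every value in
`(y k, x k]` is taken by `y` at some position to the right of `k` (for `⇐` take the IPF
`(x, x ⊔ y)`; for `⇒` read the parking of `b*` backwards). Given such `x ≠ y`, let `q` be the last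
position where they differ, so `x q < y q`, and let `p < q` be the position before `q` carrying
the largest value below `y q`. Then `z = y · (p q)` satisfies `x ⊵_R z ⊵_R y`, and as no value
between `y p` and `y q` sits between positions `p` and `q`, `ℓ(z) = ℓ(y) + 1`. Applied to the
last step `w ⊵_R y` of a chain from `x` to `y`, the covering hypothesis forces `x = z`.
-/

open Finset Equiv

theorem Relation.ReflTransGen.exists_tail_ne {α : Type*} {r : α → α → Prop} {a b : α}
    (h : ReflTransGen r a b) (hne : a ≠ b) : ∃ c, ReflTransGen r a c ∧ r c b ∧ c ≠ b := by
  induction h with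
  | refl => exact absurd rfl hne
  | @tail c d hac hcd ih =>
    by_cases hcd' : c = d
    · subst hcd'
      exact ih hne
    · exact ⟨c, hac, hcd, hcd'⟩

theorem exists_last_ne {α β : Type*} [LinearOrder α] [Fintype α] {x y : α → β} (h : x ≠ y) :
    ∃ q, x q ≠ y q ∧ ∀ k, q < k → x k = y k := by
  classical
  obtain ⟨k, hk⟩ := Function.ne_iff.1 h
  obtain ⟨q, hq, hmax⟩ := exists_max_image {k | x k ≠ y k} id ⟨k, by simpa using hk⟩
  refine ⟨q, by simpa using hq, fun k hqk => ?_⟩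
  by_contra hk
  exact (hmax k (by simpa using hk)).not_gt hqk

section

variable {n : ℕ}

theorem IsAOutcome.eq {a o o' : Fin n → Fin n} (h : IsAOutcome a o) (h' : IsAOutcome a o') :
    o = o' := by
  have no_gap : ∀ {o o' : Fin n → Fin n}, IsAOutcome a o → IsAOutcome a o' →
      ∀ i, (∀ j < i, o j = o' j) → ¬ o i < o' i := by
    intro o o' h h' i hi hlt
    obtain ⟨j, hji, hj⟩ := (h'.2 i).2 (o i) (h.2 i).1 hlt
    exact hji.ne (h.1 (by rw [hi j hji, hj]))
  funext i
  induction i using WellFoundedLT.induction with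
  | _ i ih =>
    exact le_antisymm (not_lt.1 (no_gap h' h i fun j hj => (ih j hj).symm))
      (not_lt.1 (no_gap h h' i ih))

theorem isAOutcome_pconj_iff {a o : Fin n → Fin n} :
    IsAOutcome (pconj a) (pconj o) ↔ Function.Injective o ∧
      ∀ i, o i ≤ a i ∧ ∀ s, o i < s → s ≤ a i → ∃ j, i < j ∧ o j = s := by
  have hinj : Function.Injective (pconj o) ↔ Function.Injective o :=
    (Fin.rev_injective.of_comp_iff _).trans (Function.Injective.of_comp_iff' o Fin.rev_bijective)
  refine and_congr hinj (Fin.rev_surjective.forall.trans (forall_congr' fun i => ?_))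
  simp only [pconj, Fin.rev_rev, Fin.rev_le_rev]
  refine and_congr_right' (Fin.rev_surjective.forall.trans (forall_congr' fun s => ?_))
  rw [Fin.rev_surjective.exists]
  simp only [Fin.rev_rev, Fin.rev_le_rev, Fin.rev_lt_rev, Fin.rev_inj]
  tauto

def ReachCriterion (x y : Fin n → Fin n) : Prop :=
  ∀ k t, y k < t → t ≤ x k → ∃ m, k < m ∧ y m = t

theorem reaches_iff_reachCriterion (x y : Perm (Fin n)) :
    Reaches ⇑x ⇑y ↔ ReachCriterion ⇑x ⇑y := by
  constructor
  · rintro ⟨a, b, ⟨o, hB⟩, hx, hy⟩ k t hyt htx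
    have hox : o = x := IsAOutcome.eq ⟨hB.1, fun i => ⟨(hB.2 i).1, (hB.2 i).2.2⟩⟩ hx
    exact (isAOutcome_pconj_iff.1 hy).2 k |>.2 t hyt (htx.trans (hox ▸ (hB.2 k).2.1))
  · intro h
    have no_gap : ∀ i s, x i ≤ s → s < x i → ∃ j, j < i ∧ x j = s :=
      fun i s h₁ h₂ => ((h₁.trans_lt h₂).false).elim
    refine ⟨x, x ⊔ y, ⟨x, x.injective, fun i => ⟨le_rfl, le_sup_left, no_gap i⟩⟩,
      ⟨x.injective, fun i => ⟨le_rfl, no_gap i⟩⟩,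
      isAOutcome_pconj_iff.2 ⟨y.injective, fun i => ⟨le_sup_right, fun s h₁ h₂ => ?_⟩⟩⟩
    exact h i s h₁ ((le_sup_iff.1 h₂).resolve_right h₁.not_ge)

def inversions (f : Fin n → Fin n) : Finset (Fin n × Fin n) :=
  {ab | ab.1 < ab.2 ∧ f ab.2 < f ab.1}

theorem invCount_eq_card_inversions (f : Fin n → Fin n) : invCount f = #(inversions f) := rfl

theorem invCount_mul (y σ : Perm (Fin n)) :
    (invCount ⇑(y * σ) : ℤ) = invCount ⇑y +
      ∑ ab ∈ inversions ⇑σ⁻¹, if y ab.1 < y ab.2 then 1 else -1 := by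
  set τ := σ⁻¹
  have hyσ : invCount ⇑(y * σ) = #{ab : Fin n × Fin n | τ ab.1 < τ ab.2 ∧ y ab.2 < y ab.1} :=
    card_equiv (σ.prodCongr σ) (fun ab => by simp only [mem_filter]; simp [τ])
  have hτ : #{ab : Fin n × Fin n | τ ab.1 < τ ab.2 ∧ y ab.2 < y ab.1} =
      #{ab : Fin n × Fin n | ab.1 < ab.2 ∧ τ ab.1 < τ ab.2 ∧ y ab.2 < y ab.1} +
      #{ab ∈ inversions τ | y ab.1 < y ab.2} := by
    rw [← card_filter_add_card_filter_not (fun ab : Fin n × Fin n => ab.1 < ab.2), filter_filter,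
      filter_filter]
    congr 1
    · congr 1; ext ab; simp only [mem_filter]; tauto
    · refine card_equiv (prodComm _ _) fun ab => ?_
      simp only [inversions, mem_filter, mem_univ, true_and, prodComm_apply, Prod.fst_swap,
        Prod.snd_swap]
      grind
  have hy : invCount ⇑y =
      #{ab : Fin n × Fin n | ab.1 < ab.2 ∧ τ ab.1 < τ ab.2 ∧ y ab.2 < y ab.1} +
      #{ab ∈ inversions τ | y ab.2 < y ab.1} := by
    rw [invCount_eq_card_inversions,
      ← card_filter_add_card_filter_not (fun ab : Fin n × Fin n => τ ab.1 < τ ab.2)]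
    congr 1
    · congr 1; ext ab; simp only [inversions, mem_filter, mem_univ, true_and]; tauto
    · congr 1; ext ab; simp only [inversions, mem_filter, mem_univ, true_and]
      grind [Equiv.apply_eq_iff_eq]
  have hsum : ∑ ab ∈ inversions τ, (if y ab.1 < y ab.2 then 1 else -1 : ℤ) =
      #{ab ∈ inversions τ | y ab.1 < y ab.2} - #{ab ∈ inversions τ | y ab.2 < y ab.1} := by
    have hne : {ab ∈ inversions τ | ¬ y ab.1 < y ab.2} = {ab ∈ inversions τ | y ab.2 < y ab.1} :=
      filter_congr fun ab hab => by
        simp only [inversions, mem_filter] at hab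
        exact not_lt.trans (y.injective.ne hab.2.1.ne').le_iff_lt
    rw [sum_ite, sum_const, sum_const, hne, nsmul_eq_mul, nsmul_eq_mul]
    ring
  omega

theorem inversions_swap {p q : Fin n} (hpq : p < q) :
    inversions ⇑(swap p q) = (Ioc p q).image (p, ·) ∪ (Ioo p q).image (·, q) := by
  ext ⟨a, b⟩
  simp only [inversions, mem_union, mem_image, mem_Ioc, mem_Ioo, Prod.mk.injEq, swap_apply_def]
  grind

theorem sum_inversions_swap {M : Type*} [AddCommMonoid M] (g : Fin n × Fin n → M) {p q : Fin n}
    (hpq : p < q) :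
    ∑ ab ∈ inversions ⇑(swap p q), g ab = g (p, q) + ∑ k ∈ Ioo p q, (g (p, k) + g (k, q)) := by
  have hdisj : Disjoint ((Ioc p q).image (p, ·)) ((Ioo p q).image (·, q)) := by
    simp only [disjoint_left, mem_image, mem_Ioc, mem_Ioo, not_exists, not_and]
    rintro _ ⟨k, -, rfl⟩ l ⟨hl, -⟩ h
    exact hl.ne (Prod.ext_iff.1 h).1.symm
  rw [inversions_swap hpq, sum_union hdisj, sum_image (fun _ _ _ _ h => (Prod.ext_iff.1 h).2),
    sum_image (fun _ _ _ _ h => (Prod.ext_iff.1 h).1), ← Ioo_insert_right hpq,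
    sum_insert (by simp), sum_add_distrib, add_assoc]

theorem invCount_mul_swap {y : Perm (Fin n)} {p q : Fin n} (hpq : p < q) (hy : y p < y q)
    (hgap : ∀ k, y p < y k → y k < y q → q < k) :
    invCount ⇑(y * swap p q) = invCount ⇑y + 1 := by
  have h := invCount_mul y (swap p q)
  rw [swap_inv, sum_inversions_swap _ hpq, if_pos hy, sum_eq_zero, add_zero] at h
  · omega
  · intro k hk
    rw [mem_Ioo] at hk
    have hkp : y k ≠ y p := y.injective.ne hk.1.ne'
    have hkq : y k ≠ y q := y.injective.ne hk.2.ne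
    have hout : y k < y p ∨ y q < y k := by
      by_contra! h
      exact (hgap k (h.1.lt_of_ne' hkp) (h.2.lt_of_ne hkq)).not_gt hk.2
    rcases hout with h | h
    · simp [h.not_gt, h.trans hy]
    · simp [h.not_gt, hy.trans h]

section Swap

variable {x y : Perm (Fin n)} {p q : Fin n}

theorem ReachCriterion.apply_lt_of_last_ne (h : ReachCriterion ⇑x ⇑y) (hq : x q ≠ y q)
    (hagree : ∀ k, q < k → x k = y k) : x q < y q := by
  refine hq.lt_of_le (not_lt.1 fun hlt => ?_)
  obtain ⟨m, hqm, hm⟩ := h q (x q) hlt le_rfl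
  exact hqm.ne' (x.injective (by rw [hagree m hqm, hm]))

theorem exists_swap_partner (hxq : x q < y q) (hagree : ∀ k, q < k → x k = y k) :
    ∃ p < q, y p < y q ∧ ∀ k, y p < y k → y k < y q → q < k := by
  classical
  have hmem : y.symm (x q) ∈ ({k | k < q ∧ y k < y q} : Finset (Fin n)) := by
    refine mem_filter.2 ⟨mem_univ _, lt_of_not_ge fun hle => ?_, by simpa using hxq⟩
    rcases hle.lt_or_eq with hlt | heq
    · exact hlt.ne' (x.injective (by rw [hagree _ hlt, y.apply_symm_apply]))
    · exact hxq.ne ((y.apply_symm_apply (x q)).symm.trans (congrArg y heq.symm))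
  obtain ⟨p, hp, hmax⟩ := exists_max_image _ y ⟨_, hmem⟩
  rw [mem_filter] at hp
  refine ⟨p, hp.2.1, hp.2.2, fun k hpk hkq => lt_of_not_ge fun hle => ?_⟩
  rcases hle.lt_or_eq with hlt | rfl
  · exact (hmax k (mem_filter.2 ⟨mem_univ _, hlt, hkq⟩)).not_gt hpk
  · exact hkq.false

theorem reachCriterion_mul_swap (hpq : p < q) (hy : y p < y q)
    (hgap : ∀ k, y p < y k → y k < y q → p < k) : ReachCriterion ⇑(y * swap p q) ⇑y := by
  intro k t hyt htz
  rw [Perm.mul_apply, swap_apply_def] at htz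
  split_ifs at htz with hkp hkq
  · subst hkp
    rcases htz.lt_or_eq with hlt | rfl
    · exact ⟨y.symm t, hgap _ (by simpa using hyt) (by simpa using hlt), by simp⟩
    · exact ⟨q, hpq, rfl⟩
  · exact absurd (hyt.trans_le htz) (by rw [hkq]; exact hy.not_gt)
  · exact absurd hyt htz.not_gt

theorem ReachCriterion.mul_swap (h : ReachCriterion ⇑x ⇑y) (hpq : p < q) (hy : y p < y q)
    (hxq : x q < y q) (hagree : ∀ k, q < k → x k = y k)
    (hgap : ∀ k, y p < y k → y k < y q → q < k) : ReachCriterion ⇑x ⇑(y * swap p q) := by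
  have hz : ∀ m, m ≠ p → m ≠ q → (y * swap p q) m = y m := fun m hmp hmq => by
    rw [Perm.mul_apply, swap_apply_of_ne_of_ne hmp hmq]
  intro k t hzt htx
  by_cases hkq : k = q
  · subst k
    rw [Perm.mul_apply, swap_apply_right] at hzt
    have hqm := hgap (y.symm t) (by simpa using hzt) (by simpa using htx.trans_lt hxq)
    exact ⟨y.symm t, hqm, by rw [hz _ (hpq.trans hqm).ne' hqm.ne', y.apply_symm_apply]⟩
  by_cases hkp : k = p
  · subst k
    rw [Perm.mul_apply, swap_apply_left] at hzt
    obtain ⟨m, hpm, rfl⟩ := h p t (hy.trans hzt) htx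
    exact ⟨m, hpm, hz m hpm.ne' (by rintro rfl; exact hzt.false)⟩
  rw [hz k hkp hkq] at hzt
  obtain ⟨m, hkm, rfl⟩ := h k t hzt htx
  by_cases hmp : m = p
  · subst m
    exact ⟨q, hkm.trans hpq, by rw [Perm.mul_apply, swap_apply_right]⟩
  by_cases hmq : m = q
  · subst m
    rcases lt_or_gt_of_ne hkp with hlt | hgt
    · exact ⟨p, hlt, by rw [Perm.mul_apply, swap_apply_left]⟩
    -- `p < k < q` and `y k < y q ≤ x k` force `y k < y p`; then `y p` must reappear after `k`
    have hkp' : y k < y p := by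
      refine lt_of_le_of_ne (not_lt.1 fun hlt => ?_) (y.injective.ne hkp)
      exact (hgap k hlt hzt).not_gt hkm
    obtain ⟨m', hkm', hm'⟩ := h k (y p) hkp' (hy.le.trans htx)
    exact absurd (y.injective hm' ▸ hkm') hgt.not_gt
  exact ⟨m, hkm, hz m hmp hmq⟩

theorem ReachCriterion.exists_between (h : ReachCriterion ⇑x ⇑y) (hne : x ≠ y) :
    ∃ z : Perm (Fin n), ReachCriterion ⇑x ⇑z ∧ ReachCriterion ⇑z ⇑y ∧
      invCount ⇑z = invCount ⇑y + 1 := by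
  obtain ⟨q, hq, hagree⟩ := exists_last_ne (DFunLike.coe_injective.ne hne)
  have hxq := h.apply_lt_of_last_ne hq hagree
  obtain ⟨p, hpq, hy, hgap⟩ := exists_swap_partner hxq hagree
  exact ⟨y * swap p q, h.mul_swap hpq hy hxq hagree hgap,
    reachCriterion_mul_swap hpq hy fun k h₁ h₂ => hpq.trans (hgap k h₁ h₂),
    invCount_mul_swap hpq hy hgap⟩

end Swap

end

/-- Theorem `pseudoreachable-graded`. Pseudoreachability is graded
by length: if `x` covers `y` in the pseudoreachability order then `ℓ(x) = ℓ(y) + 1`. -/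
theorem stmt12 {n : ℕ} (x y : Equiv.Perm (Fin n)) (hxy : PseudoGE x y) (hne : x ≠ y)
    (hcov : ∀ z : Equiv.Perm (Fin n),
      PseudoGE x z → x ≠ z → PseudoGE z y → z ≠ y → False) :
    invCount ⇑x = invCount ⇑y + 1 := by
  obtain ⟨w, hxw, hwy, hwy'⟩ := hxy.exists_tail_ne hne
  obtain ⟨z, hwz, hzy, hlen⟩ := ((reaches_iff_reachCriterion w y).1 hwy).exists_between hwy'
  have hzy' : z ≠ y := by
    rintro rfl
    omega
  obtain rfl : x = z := by_contra fun hxz => hcov z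
    (hxw.tail ((reaches_iff_reachCriterion w z).2 hwz)) hxz
    (.single ((reaches_iff_reachCriterion z y).2 hzy)) hzy'
  exact hlen
end
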